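/- arXiv:2407.17614 — 5 statements merged into one kernel-verified Lean document; each statement's English description precedes it below -/
import Mathlib

section
/- Let X be a real-valued random variable with P(X < 0) > 0. Define A = -X conditioned on {X < 0} and B = X conditioned on {X ≥ 0}. Suppose (i) for all odd n, E[A^n e^A]·P(X<0) ≤ E[B^n e^{-B}]·P(X≥0), and (ii) E[exp(2A)] < ∞. Then f(n) = E[X^n e^{-X}]/n! is a valid probability mass function on ℕ₀: f(n) ≥ 0 for all n and the f(n) sum to 1. -/
open MeasureTheory Real
open scoped ENNReal NNReal


lemma exp_tsum_eq' (x : ℝ) : ∑' n : ℕ, x ^ n / n.factorial = Real.exp x := by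
  rw [Real.exp_eq_exp_ℝ, NormedSpace.exp_eq_tsum_div]

lemma pow_le_factorial_mul_exp' {t : ℝ} (ht : 0 ≤ t) (n : ℕ) :
    t ^ n ≤ n.factorial * Real.exp t := by
  have h1 : t ^ n / n.factorial ≤ Real.exp t := by
    rw [← exp_tsum_eq']
    exact Summable.le_tsum (Real.summable_pow_div_factorial t) n (fun m _ => by positivity)
  have hfac : (0:ℝ) < n.factorial := by positivity
  calc t ^ n = n.factorial * (t ^ n / n.factorial) := by field_simp
    _ ≤ n.factorial * Real.exp t := mul_le_mul_of_nonneg_left h1 hfac.le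

/-- Sufficient conditions for a real-valued mixing distribution.  Let `X` be a
real-valued random variable with `P(X < 0) > 0`.  Writing the conditional-expectation
quantities as integrals over the events `{X < 0}` and `{X ≥ 0}` (so that
`E[A^n e^A]·P(X<0) = ∫_{X<0} (-X)^n e^{-X}` and
`E[B^n e^{-B}]·P(X≥0) = ∫_{X≥0} X^n e^{-X}`), suppose
(i) for all odd `n`, `E[A^n e^A]·P(X<0) ≤ E[B^n e^{-B}]·P(X≥0)`, and
(ii) `E[exp(2A)] < ∞`.
Then `f(n) = E[X^n e^{-X}]/n!` is a valid PMF on `ℕ`: nonnegative and summing to 1. -/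
theorem mixed_poisson_pmf_sufficient
    {Ω : Type*} [MeasurableSpace Ω] (μ : Measure Ω) [IsProbabilityMeasure μ]
    (X : Ω → ℝ) (hX : Measurable X)
    (hneg : 0 < μ {ω | X ω < 0})
    (hi : ∀ n : ℕ, Odd n →
      (∫ ω in {ω | X ω < 0}, (-X ω) ^ n * Real.exp (-X ω) ∂μ)
        ≤ ∫ ω in {ω | 0 ≤ X ω}, X ω ^ n * Real.exp (-X ω) ∂μ)
    (hii : IntegrableOn (fun ω => Real.exp (-(2 * X ω))) {ω | X ω < 0} μ) :
    (∀ n : ℕ, 0 ≤ (∫ ω, X ω ^ n * Real.exp (-X ω) ∂μ) / n.factorial) ∧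
      ∑' n : ℕ, (∫ ω, X ω ^ n * Real.exp (-X ω) ∂μ) / n.factorial = 1 := by
  set S : Set Ω := {ω | X ω < 0} with hSdef
  have hS : MeasurableSet S := measurableSet_lt hX measurable_const
  have hSc : Sᶜ = {ω | 0 ≤ X ω} := by ext ω; simp [hSdef, not_lt]
  have hXm : ∀ n : ℕ, Measurable (fun ω => X ω ^ n * Real.exp (-X ω)) :=
    fun n => (hX.pow_const n).mul (Real.measurable_exp.comp hX.neg)
  -- pointwise bound on S
  have hbdS : ∀ n : ℕ, ∀ ω ∈ S, ‖X ω ^ n * Real.exp (-X ω)‖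
      ≤ (n.factorial : ℝ) * Real.exp (-(2 * X ω)) := by
    intro n ω hω
    have hω' : X ω < 0 := hω
    have h1 : ‖X ω ^ n * Real.exp (-X ω)‖ = (-X ω) ^ n * Real.exp (-X ω) := by
      rw [norm_mul, norm_pow, Real.norm_eq_abs, Real.norm_eq_abs,
        abs_of_neg hω', abs_of_pos (Real.exp_pos _)]
    rw [h1]
    have h2 : (-X ω) ^ n ≤ (n.factorial : ℝ) * Real.exp (-X ω) :=
      pow_le_factorial_mul_exp' (by linarith) n
    calc (-X ω) ^ n * Real.exp (-X ω)
        ≤ ((n.factorial : ℝ) * Real.exp (-X ω)) * Real.exp (-X ω) :=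
          mul_le_mul_of_nonneg_right h2 (Real.exp_pos _).le
      _ = (n.factorial : ℝ) * Real.exp (-(2 * X ω)) := by
          rw [mul_assoc, ← Real.exp_add]; ring_nf
  have hIntS : ∀ n : ℕ, IntegrableOn (fun ω => X ω ^ n * Real.exp (-X ω)) S μ := by
    intro n
    refine Integrable.mono (hii.smul ((n.factorial : ℝ)))
      (hXm n).aestronglyMeasurable.restrict ?_
    filter_upwards [ae_restrict_mem hS] with ω hω
    have := hbdS n ω hω
    simpa [norm_smul, abs_of_pos (Real.exp_pos _)] using this
  have hIntSc : ∀ n : ℕ, IntegrableOn (fun ω => X ω ^ n * Real.exp (-X ω)) Sᶜ μ := by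
    intro n
    refine Integrable.mono (integrable_const ((n.factorial : ℝ)))
      (hXm n).aestronglyMeasurable.restrict ?_
    filter_upwards [ae_restrict_mem hS.compl] with ω hω
    have hω' : 0 ≤ X ω := by rwa [hSc] at hω
    have h2 : X ω ^ n ≤ (n.factorial : ℝ) * Real.exp (X ω) :=
      pow_le_factorial_mul_exp' hω' n
    have h3 : X ω ^ n * Real.exp (-X ω) ≤ (n.factorial : ℝ) := by
      have := mul_le_mul_of_nonneg_right h2 (Real.exp_pos (-X ω)).le
      rwa [mul_assoc, ← Real.exp_add, add_neg_cancel, Real.exp_zero, mul_one] at this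
    rw [Real.norm_eq_abs, abs_of_nonneg (by positivity), Real.norm_natCast]
    exact h3
  have hInt : ∀ n : ℕ, Integrable (fun ω => X ω ^ n * Real.exp (-X ω)) μ := by
    intro n
    rw [← integrableOn_univ, ← Set.union_compl_self S]
    exact (hIntS n).union (hIntSc n)
  constructor
  · intro n
    apply div_nonneg _ (by positivity)
    rcases Nat.even_or_odd n with he | ho
    · exact integral_nonneg fun ω => mul_nonneg (he.pow_nonneg _) (Real.exp_pos _).le
    · have hsplit := (integral_add_compl hS (hInt n)).symm
      rw [hsplit, hSc]
      have hmn : ∫ ω in S, X ω ^ n * Real.exp (-X ω) ∂μ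
          = -∫ ω in S, (-X ω) ^ n * Real.exp (-X ω) ∂μ := by
        rw [← integral_neg]
        apply integral_congr_ae
        filter_upwards with ω
        rw [ho.neg_pow]; ring
      have := hi n ho
      rw [hmn]
      linarith
  · -- sum to 1
    have hterm : ∀ n : ℕ, (∫ ω, X ω ^ n * Real.exp (-X ω) ∂μ) / n.factorial
        = ∫ ω, X ω ^ n * Real.exp (-X ω) / n.factorial ∂μ := by
      intro n; rw [integral_div]
    simp_rw [hterm]
    have hmeas2 : ∀ n : ℕ, AEStronglyMeasurable
        (fun ω => X ω ^ n * Real.exp (-X ω) / (n.factorial : ℝ)) μ :=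
      fun n => ((hXm n).div_const _).aestronglyMeasurable
    have hptsum : ∀ ω, ∑' n : ℕ, X ω ^ n * Real.exp (-X ω) / (n.factorial : ℝ) = 1 := by
      intro ω
      have : ∀ n : ℕ, X ω ^ n * Real.exp (-X ω) / (n.factorial : ℝ)
          = X ω ^ n / (n.factorial : ℝ) * Real.exp (-X ω) := fun n => by ring
      simp_rw [this, tsum_mul_right, exp_tsum_eq', ← Real.exp_add, add_neg_cancel,
        Real.exp_zero]
    have hlint : ∑' n : ℕ, ∫⁻ ω, ‖X ω ^ n * Real.exp (-X ω) / (n.factorial : ℝ)‖₊ ∂μ ≠ ⊤ := by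
      rw [← lintegral_tsum (fun n =>
        ((hXm n).div_const _).nnnorm.coe_nnreal_ennreal.aemeasurable)]
      have key : ∀ ω, (∑' n : ℕ, (‖X ω ^ n * Real.exp (-X ω) / (n.factorial : ℝ)‖₊ : ℝ≥0∞))
          = ENNReal.ofReal (Real.exp |X ω| * Real.exp (-X ω)) := by
        intro ω
        have h1 : ∀ n : ℕ, (‖X ω ^ n * Real.exp (-X ω) / (n.factorial : ℝ)‖₊ : ℝ≥0∞)
            = ENNReal.ofReal (|X ω| ^ n / (n.factorial : ℝ) * Real.exp (-X ω)) := by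
          intro n
          rw [← enorm_eq_nnnorm, ← ofReal_norm]
          congr 1
          rw [Real.norm_eq_abs, abs_div, abs_mul, abs_pow, abs_of_pos (Real.exp_pos _),
            Nat.abs_cast]
          ring
        simp_rw [h1]
        have hsum : Summable (fun n : ℕ => |X ω| ^ n / (n.factorial : ℝ) * Real.exp (-X ω)) :=
          (Real.summable_pow_div_factorial _).mul_right _
        rw [← ENNReal.ofReal_tsum_of_nonneg (fun n => by positivity) hsum,
          tsum_mul_right, exp_tsum_eq']
      simp_rw [key]
      rw [← lintegral_add_compl _ hS]
      have e1 : ∫⁻ ω in S, ENNReal.ofReal (Real.exp |X ω| * Real.exp (-X ω)) ∂μ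
          = ∫⁻ ω in S, ‖Real.exp (-(2 * X ω))‖₊ ∂μ := by
        apply setLIntegral_congr_fun hS
        intro ω hω
        beta_reduce
        have hω' : X ω < 0 := hω
        rw [abs_of_neg hω', ← Real.exp_add, ← enorm_eq_nnnorm, ← ofReal_norm, Real.norm_eq_abs,
          abs_of_pos (Real.exp_pos _)]
        ring_nf
      have e2 : ∫⁻ ω in Sᶜ, ENNReal.ofReal (Real.exp |X ω| * Real.exp (-X ω)) ∂μ
          = ∫⁻ _ in Sᶜ, 1 ∂μ := by
        apply setLIntegral_congr_fun hS.compl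
        intro ω hω
        beta_reduce
        have hω' : 0 ≤ X ω := not_lt.mp hω
        rw [abs_of_nonneg hω', ← Real.exp_add, add_neg_cancel, Real.exp_zero,
          ENNReal.ofReal_one]
      rw [e1, e2]
      have f1 : ∫⁻ ω in S, ‖Real.exp (-(2 * X ω))‖₊ ∂μ < ⊤ := hii.2
      have f2 : ∫⁻ _ in Sᶜ, (1:ℝ≥0∞) ∂μ < ⊤ := by
        rw [lintegral_one]
        exact (measure_lt_top _ _)
      exact (ENNReal.add_lt_top.mpr ⟨f1, f2⟩).ne
    rw [← integral_tsum hmeas2 hlint]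
    simp_rw [hptsum]
    simp
end

section
/- Let X follow an asymmetric Laplace distribution: P(X<0) = p ∈ (0,1), -X given X<0 is Exponential(λ₁), and X given X≥0 is Exponential(λ₂), with λ₁ ≥ λ₂ + 2 and p/(1-p) ≤ (λ₂/λ₁)·((λ₁-1)/(λ₂+1))². Then f(n) = (1-p)·λ₂/(λ₂+1)^{n+1} + p·(-1)^n·λ₁/(λ₁-1)^{n+1} is a valid probability mass function on ℕ₀. -/
open Real

/-- Mixed Poisson–asymmetric Laplace distribution: with left and right tail rates
`λ₁ ≥ λ₂ + 2 > 0`, probability `p ∈ (0,1)` of the negative tail, and odds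
`p/(1-p) ≤ (λ₂/λ₁)·((λ₁-1)/(λ₂+1))²`, the function
`f(n) = (1-p)·λ₂/(λ₂+1)^{n+1} + p·(-1)ⁿ·λ₁/(λ₁-1)^{n+1}`
is a valid probability mass function on `ℕ`. -/
theorem mixed_poisson_asymmetric_laplace (l1 l2 p : ℝ)
    (hl2 : 0 < l2) (hl1 : l2 + 2 ≤ l1)
    (hp0 : 0 < p) (hp1 : p < 1)
    (hodds : p / (1 - p) ≤ (l2 / l1) * ((l1 - 1) / (l2 + 1)) ^ 2) :
    (∀ n : ℕ, 0 ≤ (1 - p) * l2 / (l2 + 1) ^ (n + 1)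
        + p * (-1 : ℝ) ^ n * l1 / (l1 - 1) ^ (n + 1)) ∧
      ∑' n : ℕ, ((1 - p) * l2 / (l2 + 1) ^ (n + 1)
        + p * (-1 : ℝ) ^ n * l1 / (l1 - 1) ^ (n + 1)) = 1 := by
  have h2 : (0:ℝ) < l2 + 1 := by linarith
  have h1 : (0:ℝ) < l1 - 1 := by linarith
  have hle : l2 + 1 ≤ l1 - 1 := by linarith
  have hl1pos : (0:ℝ) < l1 := by linarith
  have h1p : (0:ℝ) < 1 - p := by linarith
  -- base inequality cleared of denominators
  have hR : (l2 / l1) * ((l1 - 1) / (l2 + 1)) ^ 2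
      = (l2 * (l1 - 1) ^ 2) / (l1 * (l2 + 1) ^ 2) := by
    field_simp
  rw [hR, div_le_div_iff₀ h1p (by positivity)] at hodds
  -- hodds : p * (l1 * (l2+1)^2) ≤ l2 * (l1-1)^2 * (1-p)
  constructor
  · intro n
    rcases Nat.even_or_odd n with he | ho
    · have hpow : ((-1:ℝ)) ^ n = 1 := he.neg_one_pow
      rw [hpow]
      have := pow_pos h2 (n+1)
      have := pow_pos h1 (n+1)
      positivity
    · have hpow : ((-1:ℝ)) ^ n = -1 := ho.neg_one_pow
      rw [hpow]
      obtain ⟨k, hk⟩ := ho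
      subst hk
      have key : p * l1 / (l1 - 1) ^ (2 * k + 1 + 1)
          ≤ (1 - p) * l2 / (l2 + 1) ^ (2 * k + 1 + 1) := by
        rw [div_le_div_iff₀ (pow_pos h1 _) (pow_pos h2 _)]
        have hp2 : (l2 + 1) ^ (2 * k) ≤ (l1 - 1) ^ (2 * k) :=
          pow_le_pow_left₀ h2.le hle _
        calc p * l1 * (l2 + 1) ^ (2 * k + 1 + 1)
            = (p * (l1 * (l2 + 1) ^ 2)) * (l2 + 1) ^ (2 * k) := by ring
          _ ≤ (l2 * (l1 - 1) ^ 2 * (1 - p)) * (l2 + 1) ^ (2 * k) := by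
              exact mul_le_mul_of_nonneg_right hodds (by positivity)
          _ ≤ (l2 * (l1 - 1) ^ 2 * (1 - p)) * (l1 - 1) ^ (2 * k) := by
              exact mul_le_mul_of_nonneg_left hp2 (by positivity)
          _ = (1 - p) * l2 * (l1 - 1) ^ (2 * k + 1 + 1) := by ring
      have e : p * (-1) * l1 / (l1 - 1) ^ (2 * k + 1 + 1)
          = -(p * l1 / (l1 - 1) ^ (2 * k + 1 + 1)) := by ring
      rw [e]
      linarith
  · have hn2 : l2 + 1 ≠ 0 := ne_of_gt h2
    have hn1 : l1 - 1 ≠ 0 := ne_of_gt h1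
    have e : ∀ n : ℕ, (1 - p) * l2 / (l2 + 1) ^ (n + 1)
        + p * (-1 : ℝ) ^ n * l1 / (l1 - 1) ^ (n + 1)
        = ((1 - p) * l2 / (l2 + 1)) * ((l2 + 1)⁻¹) ^ n
          + (p * l1 / (l1 - 1)) * (-(l1 - 1)⁻¹) ^ n := by
      intro n
      rw [neg_pow (l1 - 1)⁻¹, pow_succ, pow_succ]
      simp only [inv_pow]
      field_simp
    have hr : ‖(l2 + 1)⁻¹‖ < 1 := by
      rw [Real.norm_eq_abs, abs_inv, abs_of_pos h2]
      rw [inv_lt_one_iff₀]; right; linarith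
    have hs : ‖-(l1 - 1)⁻¹‖ < 1 := by
      rw [norm_neg, Real.norm_eq_abs, abs_inv, abs_of_pos h1]
      rw [inv_lt_one_iff₀]; right; linarith
    have sr := summable_geometric_of_norm_lt_one hr
    have ss := summable_geometric_of_norm_lt_one hs
    rw [tsum_congr e, Summable.tsum_add (sr.mul_left _) (ss.mul_left _),
      tsum_mul_left, tsum_mul_left,
      tsum_geometric_of_norm_lt_one hr, tsum_geometric_of_norm_lt_one hs]
    have h1' : 1 - (l2 + 1)⁻¹ = l2 / (l2 + 1) := by field_simp; ring
    have h2' : 1 - (-(l1 - 1)⁻¹) = l1 / (l1 - 1) := by field_simp; ring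
    rw [h1', h2']
    field_simp; ring
end

section
/- For 1 < α ≤ 2, σ > 0, and δ ≥ -α·sec(πα/2)·σ^α, the function G(z) = exp[(z-1)δ - sec(πα/2)·σ^α·(1-z)^α] on [0,1] satisfies: G(1) = 1, G is continuous on [0,1], and all derivatives G^{(k)}(z) are finite and nonnegative for z ∈ (0,1). Hence G is a valid probability generating function. -/
open Real Set

local notation "U" => Set.Ioo (0:ℝ) 1

private lemma hUopen : IsOpen U := isOpen_Ioo
private lemma hUdiff : UniqueDiffOn ℝ U := (isOpen_Ioo).uniqueDiffOn

private lemma iDW_eq_iD {f : ℝ → ℝ} {x : ℝ} (hx : x ∈ U) (n : ℕ) :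
    iteratedDerivWithin n f U x = iteratedDeriv n f x := by
  rw [iteratedDerivWithin, iteratedDeriv, iteratedFDerivWithin_of_isOpen n hUopen hx]

/-- smoothness of `z ↦ c * (1-z)^q` on U -/
private lemma cd_rpow (c q : ℝ) : ContDiffOn ℝ (⊤:ℕ∞) (fun z : ℝ => c * (1 - z) ^ q) U := by
  intro x hx
  have h1x : (1:ℝ) - x ≠ 0 := by have := hx.2; intro h; nlinarith [hx.2]
  exact (contDiffAt_const.mul ((Real.contDiffAt_rpow_const_of_ne h1x).comp x
    (contDiffAt_const.sub contDiffAt_id))).contDiffWithinAt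

private lemma hasDeriv_oneSub_rpow (c q : ℝ) {x : ℝ} (hx : x ∈ U) :
    HasDerivAt (fun z : ℝ => c * (1 - z) ^ q) ((c * -q) * (1 - x) ^ (q - 1)) x := by
  have h1x : (1:ℝ) - x ≠ 0 := by intro h; nlinarith [hx.2]
  have h : HasDerivAt (fun z : ℝ => (1 - z) ^ q) (q * (1 - x) ^ (q - 1) * (-1)) x :=
    (Real.hasDerivAt_rpow_const (Or.inl h1x)).comp x ((hasDerivAt_id x).const_sub 1)
  have h2 := h.const_mul c
  rw [show (c * -q) * (1 - x) ^ (q - 1) = c * (q * (1 - x) ^ (q - 1) * (-1)) by ring]; exact h2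

private lemma deriv_oneSub_rpow (c q : ℝ) {x : ℝ} (hx : x ∈ U) :
    derivWithin (fun z : ℝ => c * (1 - z) ^ q) U x = (c * -q) * (1 - x) ^ (q - 1) := by
  rw [derivWithin_of_isOpen hUopen hx, (hasDeriv_oneSub_rpow c q hx).deriv]

private lemma rpow_AM : ∀ (n : ℕ) (c q : ℝ), 0 ≤ c → q ≤ 0 → ∀ x ∈ U,
    0 ≤ iteratedDerivWithin n (fun z : ℝ => c * (1 - z) ^ q) U x := by
  intro n
  induction n with
  | zero =>
    intro c q hc _ x hx
    rw [iteratedDerivWithin_zero]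
    exact mul_nonneg hc (Real.rpow_nonneg (by linarith [hx.2]) _)
  | succ n ih =>
    intro c q hc hq x hx
    rw [iteratedDerivWithin_succ']
    have heq : Set.EqOn (derivWithin (fun z : ℝ => c * (1 - z) ^ q) U)
        (fun z : ℝ => (c * -q) * (1 - z) ^ (q - 1)) U := fun y hy => deriv_oneSub_rpow c q hy
    rw [iteratedDerivWithin_congr (n := n) heq hx]
    exact ih (c * -q) (q - 1) (mul_nonneg hc (by linarith)) (by linarith) x hx

private lemma mul_AM : ∀ (n : ℕ) (f g : ℝ → ℝ), ContDiffOn ℝ (⊤:ℕ∞) f U →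
    ContDiffOn ℝ (⊤:ℕ∞) g U →
    (∀ k ≤ n, ∀ x ∈ U, 0 ≤ iteratedDerivWithin k f U x) →
    (∀ k ≤ n, ∀ x ∈ U, 0 ≤ iteratedDerivWithin k g U x) →
    ∀ x ∈ U, 0 ≤ iteratedDerivWithin n (fun z => f z * g z) U x := by
  intro n
  induction n with
  | zero =>
    intro f g _ _ hfp hgp x hx
    rw [iteratedDerivWithin_zero]
    have h1 := hfp 0 le_rfl x hx
    have h2 := hgp 0 le_rfl x hx
    rw [iteratedDerivWithin_zero] at h1 h2
    exact mul_nonneg h1 h2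
  | succ n ih =>
    intro f g hf hg hfp hgp x hx
    rw [iteratedDerivWithin_succ']
    have heq : Set.EqOn (derivWithin (fun z => f z * g z) U)
        (fun z => derivWithin f U z * g z + f z * derivWithin g U z) U := by
      intro y hy
      exact derivWithin_mul
        (hf.differentiableOn (by simp) y hy) (hg.differentiableOn (by simp) y hy)
    rw [iteratedDerivWithin_congr (n := n) heq hx]
    have hf' : ContDiffOn ℝ (⊤:ℕ∞) (derivWithin f U) U :=
      hf.derivWithin hUdiff (by exact_mod_cast le_top)
    have hg' : ContDiffOn ℝ (⊤:ℕ∞) (derivWithin g U) U :=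
      hg.derivWithin hUdiff (by exact_mod_cast le_top)
    have hsplit : (fun z => derivWithin f U z * g z + f z * derivWithin g U z) =
        (fun z => derivWithin f U z * g z) + (fun z => f z * derivWithin g U z) := rfl
    rw [hsplit, iteratedDerivWithin_add hx hUdiff (((hf'.mul hg).of_le (by exact_mod_cast le_top)) x hx)
      (((hf.mul hg').of_le (by exact_mod_cast le_top)) x hx)]
    have t1 := ih (derivWithin f U) g hf' hg
      (fun k hk y hy => by
        rw [← iteratedDerivWithin_succ']
        exact hfp (k+1) (by omega) y hy)
      (fun k hk y hy => hgp k (by omega) y hy) x hx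
    have t2 := ih f (derivWithin g U) hf hg'
      (fun k hk y hy => hfp k (by omega) y hy)
      (fun k hk y hy => by
        rw [← iteratedDerivWithin_succ']
        exact hgp (k+1) (by omega) y hy) x hx
    exact add_nonneg t1 t2

/-- Main auxiliary lemma: absolute monotonicity of the PGF on (0,1). -/
private lemma main_aux (α s δ : ℝ) (hα1 : 1 < α) (hα2 : α ≤ 2) (hs : s < 0)
    (hδ : -(α * s) ≤ δ) :
    ∀ k : ℕ, ∀ z ∈ U,
      0 ≤ iteratedDerivWithin k
        (fun z : ℝ => Real.exp ((z - 1) * δ - s * (1 - z) ^ α)) U z := by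
  set G : ℝ → ℝ := fun z => Real.exp ((z - 1) * δ - s * (1 - z) ^ α) with hGdef
  set r : ℝ → ℝ := fun z => δ + (s * α) * (1 - z) ^ (α - 1) with hrdef
  -- smoothness of G
  have hinner : ContDiffOn ℝ (⊤:ℕ∞) (fun z : ℝ => (z - 1) * δ - s * (1 - z) ^ α) U :=
    ((contDiffOn_id.sub contDiffOn_const).mul contDiffOn_const).sub (cd_rpow s α)
  have hG : ContDiffOn ℝ (⊤:ℕ∞) G U := Real.contDiff_exp.comp_contDiffOn hinner
  have hr : ContDiffOn ℝ (⊤:ℕ∞) r U := contDiffOn_const.add (cd_rpow (s * α) (α - 1))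
  -- derivative of G
  have hderivG : ∀ x ∈ U, derivWithin G U x = G x * r x := by
    intro x hx
    have h1 : HasDerivAt (fun z : ℝ => (z - 1) * δ) (1 * δ) x :=
      ((hasDerivAt_id x).sub_const 1).mul_const δ
    have h2 := hasDeriv_oneSub_rpow s α hx
    have h3 : HasDerivAt (fun z : ℝ => (z - 1) * δ - s * (1 - z) ^ α)
        (1 * δ - (s * -α) * (1 - x) ^ (α - 1)) x := h1.sub h2
    have h4 := h3.exp
    rw [derivWithin_of_isOpen hUopen hx, h4.deriv]
    simp only [hGdef, hrdef]
    ring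
  -- r is absolutely monotone on U
  have hr_AM : ∀ k : ℕ, ∀ x ∈ U, 0 ≤ iteratedDerivWithin k r U x := by
    intro k x hx
    match k with
    | 0 =>
      rw [iteratedDerivWithin_zero]
      have ht0 : (0:ℝ) ≤ (1 - x) ^ (α - 1) := Real.rpow_nonneg (by linarith [hx.2]) _
      have ht1 : (1 - x) ^ (α - 1) ≤ 1 :=
        Real.rpow_le_one (by linarith [hx.2]) (by linarith [hx.1]) (by linarith)
      have hsa : s * α ≤ 0 := by nlinarith
      have key : s * α * 1 ≤ s * α * (1 - x) ^ (α - 1) :=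
        mul_le_mul_of_nonpos_left ht1 hsa
      simp only [hrdef]
      nlinarith
    | (k+1) =>
      rw [iteratedDerivWithin_succ']
      have heq : Set.EqOn (derivWithin r U)
          (fun z : ℝ => ((s * α) * -(α - 1)) * (1 - z) ^ (α - 1 - 1)) U := by
        intro y hy
        have h0 : HasDerivAt r (((s * α) * -(α - 1)) * (1 - y) ^ (α - 1 - 1)) y := by
          have := (hasDeriv_oneSub_rpow (s * α) (α - 1) hy).const_add δ
          simpa [hrdef] using this
        rw [derivWithin_of_isOpen hUopen hy, h0.deriv]
      rw [iteratedDerivWithin_congr (n := k) heq hx]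
      exact rpow_AM k _ _ (by nlinarith [mul_nonneg (mul_nonneg (neg_nonneg.mpr hs.le) (by linarith : (0:ℝ) ≤ α)) (by linarith : (0:ℝ) ≤ α - 1)]) (by linarith) x hx
  -- main induction
  have key : ∀ n : ℕ, ∀ k ≤ n, ∀ x ∈ U, 0 ≤ iteratedDerivWithin k G U x := by
    intro n
    induction n with
    | zero =>
      intro k hk x hx
      obtain rfl := Nat.le_zero.mp hk
      rw [iteratedDerivWithin_zero]
      exact (Real.exp_pos _).le
    | succ n ih =>
      intro k hk x hx
      by_cases hk' : k ≤ n
      · exact ih k hk' x hx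
      · have hk2 : k = n + 1 := by omega
        subst hk2
        rw [iteratedDerivWithin_succ']
        have heq : Set.EqOn (derivWithin G U) (fun z => G z * r z) U :=
          fun y hy => hderivG y hy
        rw [iteratedDerivWithin_congr (n := n) heq hx]
        exact mul_AM n G r hG hr (fun k hk y hy => ih k hk y hy)
          (fun k _ y hy => hr_AM k y hy) x hx
  intro k z hz
  exact key k k le_rfl z hz

/-- Mixed Poisson–extreme stable PGF, case `1 < α ≤ 2`: for `σ > 0` and
`δ ≥ -α·sec(πα/2)·σ^α`, the function
`G(z) = exp[(z-1)δ - sec(πα/2)·σ^α·(1-z)^α]` satisfies `G(1) = 1`, is continuous on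
`[0,1]`, and all of its derivatives are nonnegative (and finite) on `(0,1)`; hence it
is a valid probability generating function. -/
theorem mixed_poisson_extreme_stable_pgf (α σ δ : ℝ)
    (hα1 : 1 < α) (hα2 : α ≤ 2) (hσ : 0 < σ)
    (hδ : -α * (Real.cos (Real.pi * α / 2))⁻¹ * σ ^ α ≤ δ) :
    (fun z : ℝ => Real.exp ((z - 1) * δ
        - (Real.cos (Real.pi * α / 2))⁻¹ * σ ^ α * (1 - z) ^ α)) 1 = 1 ∧
    ContinuousOn
      (fun z : ℝ => Real.exp ((z - 1) * δ
        - (Real.cos (Real.pi * α / 2))⁻¹ * σ ^ α * (1 - z) ^ α))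
      (Set.Icc 0 1) ∧
    ∀ k : ℕ, ∀ z ∈ Set.Ioo (0:ℝ) 1,
      0 ≤ iteratedDeriv k
        (fun z : ℝ => Real.exp ((z - 1) * δ
          - (Real.cos (Real.pi * α / 2))⁻¹ * σ ^ α * (1 - z) ^ α)) z := by
  have hπ := Real.pi_pos
  have hcos : Real.cos (Real.pi * α / 2) < 0 := by
    apply Real.cos_neg_of_pi_div_two_lt_of_lt
    · nlinarith
    · nlinarith
  have hσα : (0:ℝ) < σ ^ α := Real.rpow_pos_of_pos hσ α
  have hsneg : (Real.cos (Real.pi * α / 2))⁻¹ * σ ^ α < 0 :=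
    mul_neg_of_neg_of_pos (inv_neg''.mpr hcos) hσα
  refine ⟨?_, ?_, ?_⟩
  · simp only
    rw [show (1:ℝ) - 1 = 0 by ring, Real.zero_rpow (by linarith : α ≠ 0)]
    norm_num
  · apply Continuous.continuousOn
    apply Real.continuous_exp.comp
    exact ((continuous_id.sub continuous_const).mul continuous_const).sub
      (continuous_const.mul ((continuous_const.sub continuous_id).rpow_const
        (fun x => Or.inr (by linarith))))
  · intro k z hz
    rw [← iDW_eq_iD hz k]
    exact main_aux α ((Real.cos (Real.pi * α / 2))⁻¹ * σ ^ α) δ hα1 hα2 hsneg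
      (by nlinarith) k z hz
end

section
/- For σ ≥ 0 and δ ≥ 2σ/π, the function G(z) = exp[(z-1)δ + (2σ/π)(1-z)log(1-z)] for z ∈ [0,1) with G(1) = 1 satisfies: G is continuous on [0,1], and all derivatives G^{(k)}(z) are finite and nonnegative for z ∈ (0,1). Hence G is a valid probability generating function. -/
open Real

/-- Auxiliary class of functions: nonnegative combinations of `-log (1-z)` and `(1-z)⁻¹`. -/
inductive PGFPoly : (ℝ → ℝ) → Prop
  | const (t : ℝ) (ht : 0 ≤ t) : PGFPoly fun _ => t
  | vfun : PGFPoly fun z => -Real.log (1 - z)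
  | ufun : PGFPoly fun z => (1 - z)⁻¹
  | add {f g : ℝ → ℝ} : PGFPoly f → PGFPoly g → PGFPoly fun z => f z + g z
  | mul {f g : ℝ → ℝ} : PGFPoly f → PGFPoly g → PGFPoly fun z => f z * g z

lemma PGFPoly.nonneg {f : ℝ → ℝ} (hf : PGFPoly f) {z : ℝ} (hz : z ∈ Set.Ioo (0:ℝ) 1) :
    0 ≤ f z := by
  obtain ⟨hz0, hz1⟩ := hz
  induction hf with
  | const t ht => exact ht
  | vfun =>
      simp only [neg_nonneg]
      exact Real.log_nonpos (by linarith) (by linarith)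
  | ufun => exact inv_nonneg.mpr (by linarith)
  | add hf hg ihf ihg => exact add_nonneg ihf ihg
  | mul hf hg ihf ihg => exact mul_nonneg ihf ihg

lemma PGFPoly.hasDeriv {f : ℝ → ℝ} (hf : PGFPoly f) :
    ∃ f' : ℝ → ℝ, PGFPoly f' ∧ ∀ z ∈ Set.Ioo (0:ℝ) 1, HasDerivAt f (f' z) z := by
  induction hf with
  | const t ht =>
      exact ⟨fun _ => 0, .const 0 le_rfl, fun z _ => hasDerivAt_const z t⟩
  | vfun =>
      refine ⟨fun z => (1 - z)⁻¹, .ufun, fun z hz => ?_⟩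
      have h1z : (0:ℝ) < 1 - z := by linarith [hz.2]
      have h : HasDerivAt (fun z : ℝ => 1 - z) (0 - 1) z :=
        (hasDerivAt_const z 1).sub (hasDerivAt_id z)
      have := ((Real.hasDerivAt_log h1z.ne').comp z h).neg
      refine this.congr_deriv ?_
      field_simp
      norm_num
  | ufun =>
      refine ⟨fun z => (1 - z)⁻¹ * (1 - z)⁻¹, .mul .ufun .ufun, fun z hz => ?_⟩
      have h1z : (0:ℝ) < 1 - z := by linarith [hz.2]
      have h : HasDerivAt (fun z : ℝ => 1 - z) (0 - 1) z :=
        (hasDerivAt_const z 1).sub (hasDerivAt_id z)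
      have := h.inv h1z.ne'
      refine this.congr_deriv ?_
      field_simp
      ring
  | add hf hg ihf ihg =>
      obtain ⟨f', hf', hdf⟩ := ihf
      obtain ⟨g', hg', hdg⟩ := ihg
      exact ⟨fun z => f' z + g' z, .add hf' hg',
        fun z hz => (hdf z hz).add (hdg z hz)⟩
  | @mul f g hf hg ihf ihg =>
      obtain ⟨f', hf', hdf⟩ := ihf
      obtain ⟨g', hg', hdg⟩ := ihg
      exact ⟨fun z => f' z * g z + f z * g' z, .add (.mul hf' hg) (.mul hf hg'),
        fun z hz => (hdf z hz).mul (hdg z hz)⟩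

/-- Mixed Poisson–extreme stable PGF, case `α = 1`: for `σ ≥ 0` and `δ ≥ 2σ/π`, the
function `G(z) = exp[(z-1)δ + (2σ/π)(1-z)log(1-z)]` (with `G(1) = 1` by continuity,
which holds automatically since `Real.log 0 = 0`) is continuous on `[0,1]` and all of
its derivatives are nonnegative (and finite) on `(0,1)`; hence it is a valid
probability generating function. -/
theorem mixed_poisson_extreme_stable_pgf_alpha_one (σ δ : ℝ)
    (hσ : 0 ≤ σ) (hδ : 2 * σ / Real.pi ≤ δ) :
    (fun z : ℝ => Real.exp ((z - 1) * δ
        + (2 * σ / Real.pi) * (1 - z) * Real.log (1 - z))) 1 = 1 ∧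
    ContinuousOn
      (fun z : ℝ => Real.exp ((z - 1) * δ
        + (2 * σ / Real.pi) * (1 - z) * Real.log (1 - z)))
      (Set.Icc 0 1) ∧
    ∀ k : ℕ, ∀ z ∈ Set.Ioo (0:ℝ) 1,
      0 ≤ iteratedDeriv k
        (fun z : ℝ => Real.exp ((z - 1) * δ
          + (2 * σ / Real.pi) * (1 - z) * Real.log (1 - z))) z := by
  set c : ℝ := 2 * σ / Real.pi with hc_def
  have hc : 0 ≤ c := by positivity
  have hdc : 0 ≤ δ - c := by linarith
  set G : ℝ → ℝ := fun z : ℝ => Real.exp ((z - 1) * δ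
      + c * (1 - z) * Real.log (1 - z)) with hG_def
  refine ⟨by simp [hG_def], ?_, ?_⟩
  · -- continuity on [0,1]
    have h1 : Continuous fun z : ℝ => (1 - z) * Real.log (1 - z) :=
      Real.continuous_mul_log.comp (continuous_const.sub continuous_id)
    have h2 : Continuous G := by
      apply Real.continuous_exp.comp
      have : (fun z : ℝ => (z - 1) * δ + c * (1 - z) * Real.log (1 - z))
          = fun z : ℝ => (z - 1) * δ + c * ((1 - z) * Real.log (1 - z)) := by
        funext z; ring
      rw [this]
      exact ((continuous_id.sub continuous_const).mul continuous_const).add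
        (continuous_const.mul h1)
    exact h2.continuousOn
  · -- nonnegativity of all iterated derivatives on (0,1)
    set r : ℝ → ℝ := fun z => (δ - c) + c * (-Real.log (1 - z)) with hr_def
    have hr : PGFPoly r := .add (.const _ hdc) (.mul (.const c hc) .vfun)
    have hG : ∀ z ∈ Set.Ioo (0:ℝ) 1, HasDerivAt G (G z * r z) z := by
      intro z hz
      have h1z : (0:ℝ) < 1 - z := by linarith [hz.2]
      have hsub : HasDerivAt (fun z : ℝ => 1 - z) (0 - 1) z :=
        (hasDerivAt_const z 1).sub (hasDerivAt_id z)
      have hlog : HasDerivAt (fun z : ℝ => Real.log (1 - z)) ((1 - z)⁻¹ * (0 - 1)) z :=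
        (Real.hasDerivAt_log h1z.ne').comp z hsub
      have hmul : HasDerivAt (fun z : ℝ => (1 - z) * Real.log (1 - z))
          ((0 - 1) * Real.log (1 - z) + (1 - z) * ((1 - z)⁻¹ * (0 - 1))) z :=
        hsub.mul hlog
      have h1 : HasDerivAt (fun z : ℝ => (z - 1) * δ) (1 * δ) z :=
        ((hasDerivAt_id z).sub_const 1).mul_const δ
      have hF : HasDerivAt (fun z : ℝ => (z - 1) * δ + c * (1 - z) * Real.log (1 - z))
          (r z) z := by
        have hF' : (fun z : ℝ => (z - 1) * δ + c * (1 - z) * Real.log (1 - z))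
            = fun z : ℝ => (z - 1) * δ + c * ((1 - z) * Real.log (1 - z)) := by
          funext z; ring
        rw [hF']
        have := h1.add (hmul.const_mul c)
        refine this.congr_deriv ?_
        rw [hr_def]
        field_simp
        ring
      simpa [hG_def] using hF.exp
    have key : ∀ k : ℕ, ∃ p : ℝ → ℝ, PGFPoly p ∧
        ∀ z ∈ Set.Ioo (0:ℝ) 1, iteratedDeriv k G z = G z * p z := by
      intro k
      induction k with
      | zero =>
          exact ⟨fun _ => 1, .const 1 zero_le_one, fun z _ => by simp⟩
      | succ k ih =>
          obtain ⟨p, hp, hpe⟩ := ih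
          obtain ⟨p', hp', hdp⟩ := hp.hasDeriv
          refine ⟨fun z => r z * p z + p' z, .add (.mul hr hp) hp', fun z hz => ?_⟩
          have heq : iteratedDeriv k G =ᶠ[nhds z] fun w => G w * p w :=
            Filter.eventuallyEq_of_mem (isOpen_Ioo.mem_nhds hz) fun w hw => hpe w hw
          have hdG : HasDerivAt (fun w => G w * p w)
              ((G z * r z) * p z + G z * p' z) z :=
            (hG z hz).mul (hdp z hz)
          rw [iteratedDeriv_succ, heq.deriv_eq, hdG.deriv]
          ring
    intro k z hz
    obtain ⟨p, hp, hpe⟩ := key k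
    rw [hpe z hz]
    exact mul_nonneg (Real.exp_pos _).le (hp.nonneg hz)
end

section
/- Let X be a real-valued random variable with P(X<0) > 0 and P(X≥0) > 0, and let A = -X conditioned on X<0 and B = X conditioned on X≥0. Suppose B is q-subweibull for some q > 1 but A (while subexponential with E[e^A] < ∞) is not q-subweibull. Then liminf over odd n of E[B^n e^{-B}] / E[A^n e^A] = 0; consequently f(n) = E[X^n e^{-X}]/n! is negative for some odd n and cannot be a valid probability mass function. -/
open MeasureTheory Filter Real ENNReal

private lemma aux_rpow_le_exp {s r : ℝ} (hs : 0 ≤ s) (hr : 0 < r) :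
    s ^ r ≤ (r / Real.exp 1) ^ r * Real.exp s := by
  rcases eq_or_lt_of_le hs with h | h
  · rw [← h, Real.zero_rpow hr.ne']
    positivity
  · have h1 : Real.log (s / r) ≤ s / r - 1 := Real.log_le_sub_one_of_pos (by positivity)
    rw [Real.log_div h.ne' hr.ne'] at h1
    have h3 := mul_le_mul_of_nonneg_right h1 hr.le
    rw [sub_mul, sub_mul, div_mul_cancel₀ _ hr.ne'] at h3
    have h2 : Real.log s * r ≤ Real.log (r / Real.exp 1) * r + s := by
      rw [Real.log_div hr.ne' (Real.exp_pos 1).ne', Real.log_exp]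
      nlinarith
    calc s ^ r = Real.exp (Real.log s * r) := Real.rpow_def_of_pos h r
      _ ≤ Real.exp (Real.log (r / Real.exp 1) * r + s) := Real.exp_le_exp.2 h2
      _ = (r / Real.exp 1) ^ r * Real.exp s := by
          rw [Real.exp_add, ← Real.rpow_def_of_pos (by positivity)]

private lemma aux_pow_self_le (m : ℕ) : (m : ℝ) ^ m ≤ Real.exp 1 ^ m * m.factorial := by
  have h1 : (m:ℝ)^m / m.factorial ≤ Real.exp m := by
    calc (m:ℝ)^m / m.factorial
        ≤ ∑ i ∈ Finset.range (m+1), (m:ℝ)^i / i.factorial := by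
          refine Finset.single_le_sum (f := fun i => (m:ℝ)^i / i.factorial)
            (fun i _ => by positivity) (Finset.self_mem_range_succ m)
      _ ≤ Real.exp m := Real.sum_le_exp_of_nonneg (Nat.cast_nonneg m) (m+1)
  have h2 : Real.exp (m:ℝ) = Real.exp 1 ^ m := by
    rw [← Real.exp_nat_mul]; norm_num
  have h4 : (0:ℝ) < m.factorial := by positivity
  rw [div_le_iff₀ h4, h2] at h1
  exact h1

private lemma aux_rpow_le_one_add_pow {a r : ℝ} (ha : 0 ≤ a) (hr : 0 ≤ r) {k : ℕ} (hk : r ≤ k) :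
    a ^ r ≤ 1 + a ^ k := by
  rcases le_total a 1 with h | h
  · have h1 : a ^ r ≤ 1 := Real.rpow_le_one ha h hr
    nlinarith [pow_nonneg ha k]
  · have h1 : a ^ r ≤ a ^ (k:ℝ) := Real.rpow_le_rpow_of_exponent_le h hk
    rw [Real.rpow_natCast] at h1
    nlinarith

private lemma aux_succ_pow (m : ℕ) : ((m:ℝ)+1) ^ m ≤ 2 ^ m * (m:ℝ) ^ m := by
  cases m with
  | zero => norm_num
  | succ p =>
      rw [← mul_pow]
      refine pow_le_pow_left₀ (by positivity) ?_ _
      push_cast; nlinarith [Nat.cast_nonneg (α := ℝ) p]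

private lemma aux_le_two_pow (m : ℕ) : ((m:ℝ)+1) ≤ 2 ^ m := by
  have := Nat.lt_two_pow_self (n := m)
  exact_mod_cast Nat.succ_le_of_lt this

private lemma aux_growth {q K c : ℝ} (hq : 1 < q) (hK : 1 ≤ K) (hc : 2 ≤ c)
    {m kk : ℕ} (hk1 : q * m ≤ kk) (hk2 : (kk:ℝ) ≤ q * m + c) :
    K ^ kk * (kk:ℝ) ^ ((kk:ℝ)/q) ≤
      (K ^ c * (q+c) ^ (c/q)) * (K ^ q * ((q+c) * (2*Real.exp 1) * (2:ℝ)^(c/q))) ^ m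
        * m.factorial := by
  have hq0 : (0:ℝ) < q := by linarith
  have hK0 : (0:ℝ) < K := by linarith
  have hc0 : (0:ℝ) < c := by linarith
  have hm0 : (0:ℝ) ≤ q * m := by positivity
  have hbase1 : (1:ℝ) ≤ q * m + c := by linarith
  -- A1
  have A1 : (K:ℝ) ^ kk ≤ (K ^ q) ^ m * K ^ c := by
    have : (K:ℝ) ^ (kk:ℝ) ≤ K ^ (q * m + c) :=
      Real.rpow_le_rpow_of_exponent_le hK hk2
    rw [Real.rpow_natCast] at this
    calc (K:ℝ) ^ kk ≤ K ^ (q * m + c) := this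
      _ = K ^ (q * m) * K ^ c := Real.rpow_add hK0 _ _
      _ = (K ^ q) ^ m * K ^ c := by
          rw [Real.rpow_mul hK0.le, Real.rpow_natCast]
  -- A2+A3
  have A23 : (kk:ℝ) ^ ((kk:ℝ)/q) ≤ (q*m+c) ^ ((q*m+c)/q) := by
    calc (kk:ℝ) ^ ((kk:ℝ)/q) ≤ (q*m+c) ^ ((kk:ℝ)/q) :=
          Real.rpow_le_rpow (Nat.cast_nonneg kk) hk2 (by positivity)
      _ ≤ (q*m+c) ^ ((q*m+c)/q) :=
          Real.rpow_le_rpow_of_exponent_le hbase1 (by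
            gcongr)
  -- A4
  have A4 : (q*m+c) ^ ((q*m+c)/q) = (q*m+c) ^ m * (q*m+c) ^ (c/q) := by
    have : (q*m+c)/q = (m:ℝ) + c/q := by field_simp
    rw [this, Real.rpow_add (by linarith), Real.rpow_natCast]
  -- A5,A6,A7,A8
  have A5 : (q*m+c) ^ m ≤ (q+c) ^ m * (((m:ℝ)+1) ^ m) := by
    rw [← mul_pow]
    refine pow_le_pow_left₀ (by positivity) ?_ _
    nlinarith [Nat.cast_nonneg (α := ℝ) m]
  have A78 : ((m:ℝ)+1) ^ m ≤ 2 ^ m * (Real.exp 1 ^ m * m.factorial) := by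
    calc ((m:ℝ)+1) ^ m ≤ 2 ^ m * (m:ℝ) ^ m := aux_succ_pow m
      _ ≤ 2 ^ m * (Real.exp 1 ^ m * m.factorial) := by
          have := aux_pow_self_le m
          nlinarith [pow_nonneg (by norm_num : (0:ℝ) ≤ 2) m]
  -- A9,A10
  have A9 : (q*m+c) ^ (c/q) ≤ (q+c) ^ (c/q) * (((2:ℝ)^(c/q)) ^ m) := by
    have hle : q*m+c ≤ (q+c) * (((m:ℝ))+1) := by nlinarith [Nat.cast_nonneg (α := ℝ) m]
    calc (q*m+c) ^ (c/q) ≤ ((q+c) * ((m:ℝ)+1)) ^ (c/q) :=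
          Real.rpow_le_rpow (by linarith) hle (by positivity)
      _ = (q+c) ^ (c/q) * ((m:ℝ)+1) ^ (c/q) :=
          Real.mul_rpow (by linarith) (by positivity)
      _ ≤ (q+c) ^ (c/q) * (((2:ℝ)^(c/q)) ^ m) := by
          have h1 : ((m:ℝ)+1) ^ (c/q) ≤ ((2:ℝ)^m) ^ (c/q) :=
            Real.rpow_le_rpow (by positivity) (aux_le_two_pow m) (by positivity)
          have h2 : ((2:ℝ)^m) ^ (c/q) = ((2:ℝ)^(c/q)) ^ m := by
            rw [← Real.rpow_natCast (2:ℝ) m, ← Real.rpow_mul (by norm_num),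
              mul_comm, Real.rpow_mul (by norm_num), Real.rpow_natCast]
          have h3 : (0:ℝ) ≤ (q+c) ^ (c/q) := by positivity
          nlinarith [h1, h2 ▸ h1]
  -- combine
  have hkkpow : (0:ℝ) ≤ (kk:ℝ) ^ ((kk:ℝ)/q) := by positivity
  have hKkk : (0:ℝ) ≤ (K:ℝ) ^ kk := by positivity
  calc K ^ kk * (kk:ℝ) ^ ((kk:ℝ)/q)
      ≤ ((K ^ q) ^ m * K ^ c) * ((q*m+c) ^ ((q*m+c)/q)) := by
        refine mul_le_mul A1 A23 hkkpow (by positivity)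
    _ = ((K ^ q) ^ m * K ^ c) * ((q*m+c) ^ m * (q*m+c) ^ (c/q)) := by rw [A4]
    _ ≤ ((K ^ q) ^ m * K ^ c) *
        (((q+c) ^ m * (2 ^ m * (Real.exp 1 ^ m * m.factorial))) *
          ((q+c) ^ (c/q) * (((2:ℝ)^(c/q)) ^ m))) := by
        refine mul_le_mul_of_nonneg_left ?_ (by positivity)
        refine mul_le_mul ?_ A9 (by positivity) (by positivity)
        calc (q*m+c) ^ m ≤ (q+c) ^ m * (((m:ℝ)+1) ^ m) := A5
          _ ≤ (q+c) ^ m * (2 ^ m * (Real.exp 1 ^ m * m.factorial)) := by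
              refine mul_le_mul_of_nonneg_left A78 (by positivity)
    _ = (K ^ c * (q+c) ^ (c/q)) * (K ^ q * ((q+c) * (2*Real.exp 1) * (2:ℝ)^(c/q))) ^ m
        * m.factorial := by
        rw [mul_pow, mul_pow, mul_pow, mul_pow]
        ring

private lemma aux_numer_ptwise {l q : ℝ} (hl : 0 < l) (hq : 1 < q) {n : ℕ} (hn : 1 ≤ n)
    {t : ℝ} (ht : 0 ≤ t) :
    t ^ n * Real.exp (-t) ≤
      (l⁻¹ * (1 / (q * Real.exp 1)) ^ (1/q)) ^ n * (n:ℝ) ^ ((n:ℝ)/q)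
        * Real.exp (l ^ q * t ^ q) := by
  have hq0 : (0:ℝ) < q := by linarith
  have hlhs : t ^ n * Real.exp (-t) ≤ t ^ n := by
    have h1 : Real.exp (-t) ≤ 1 := Real.exp_le_one_iff.2 (by linarith)
    nlinarith [pow_nonneg ht n, Real.exp_pos (-t)]
  rcases eq_or_lt_of_le ht with h | h
  · refine le_trans hlhs ?_
    rw [← h, zero_pow (by omega : n ≠ 0)]
    positivity
  · -- t > 0
    set s : ℝ := l ^ q * t ^ q with hs
    have hs0 : 0 < s := by
      have := Real.rpow_pos_of_pos hl q
      have := Real.rpow_pos_of_pos h q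
      positivity
    have hr0 : 0 < (n:ℝ)/q := by positivity
    have h0 := aux_rpow_le_exp hs0.le hr0
    -- s ^ (n/q) = l^n * t^n
    have hsplit : s ^ ((n:ℝ)/q) = l ^ n * t ^ n := by
      rw [hs, Real.mul_rpow (by positivity) (by positivity),
        ← Real.rpow_mul hl.le, ← Real.rpow_mul h.le]
      have : q * ((n:ℝ)/q) = (n:ℝ) := by field_simp
      rw [this, Real.rpow_natCast, Real.rpow_natCast]
    -- (r/e)^r = n^{n/q} * ((1/(q e))^{1/q})^n
    have hre : ((n:ℝ)/q / Real.exp 1) ^ ((n:ℝ)/q)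
        = (n:ℝ) ^ ((n:ℝ)/q) * ((1 / (q * Real.exp 1)) ^ (1/q)) ^ n := by
      have e1 : (n:ℝ)/q / Real.exp 1 = (n:ℝ) * (1 / (q * Real.exp 1)) := by
        field_simp
      rw [e1, Real.mul_rpow (Nat.cast_nonneg n) (by positivity)]
      congr 1
      rw [← Real.rpow_natCast ((1 / (q * Real.exp 1)) ^ (1/q)) n,
        ← Real.rpow_mul (by positivity)]
      congr 1
      ring
    -- combine: t^n = s^{n/q} / l^n ≤ ...
    have hln : (0:ℝ) < l ^ n := by positivity
    have key : t ^ n ≤ (l⁻¹ * (1 / (q * Real.exp 1)) ^ (1/q)) ^ n * (n:ℝ) ^ ((n:ℝ)/q)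
        * Real.exp s := by
      have h2 : l ^ n * t ^ n ≤ ((n:ℝ)/q / Real.exp 1) ^ ((n:ℝ)/q) * Real.exp s := by
        rw [← hsplit]; exact h0
      rw [hre] at h2
      rw [mul_pow, inv_pow]
      have h3 : t ^ n = (l ^ n)⁻¹ * (l ^ n * t ^ n) := by field_simp
      rw [h3]
      calc (l^n)⁻¹ * (l^n * t^n)
          ≤ (l^n)⁻¹ * ((n:ℝ) ^ ((n:ℝ)/q) * ((1 / (q * Real.exp 1)) ^ (1/q)) ^ n
              * Real.exp s) :=
            mul_le_mul_of_nonneg_left h2 (by positivity)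
        _ = (l ^ n)⁻¹ * ((1 / (q * Real.exp 1)) ^ (1/q)) ^ n * (n:ℝ) ^ ((n:ℝ)/q)
              * Real.exp s := by ring
    exact le_trans hlhs key

private lemma aux_numer_bound {Ω : Type*} [MeasurableSpace Ω] (μ : Measure Ω)
    (X : Ω → ℝ) (hX : Measurable X) {q l : ℝ} (hq : 1 < q) (hl : 0 < l) {n : ℕ} (hn : 1 ≤ n) :
    ∫⁻ ω in {ω | 0 ≤ X ω}, ENNReal.ofReal (X ω ^ n * Real.exp (-X ω)) ∂μ ≤
      ENNReal.ofReal ((l⁻¹ * (1 / (q * Real.exp 1)) ^ (1/q)) ^ n * (n:ℝ) ^ ((n:ℝ)/q)) *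
        ∫⁻ ω in {ω | 0 ≤ X ω}, ENNReal.ofReal (Real.exp (l ^ q * X ω ^ q)) ∂μ := by
  rw [← lintegral_const_mul' _ _ ENNReal.ofReal_ne_top]
  refine setLIntegral_mono ?_ (fun ω hω => ?_)
  · fun_prop
  · rw [← ENNReal.ofReal_mul (by positivity)]
    exact ENNReal.ofReal_le_ofReal (aux_numer_ptwise hl hq hn hω)

private lemma aux_denom_large {Ω : Type*} [MeasurableSpace Ω] (μ : Measure Ω)
    [IsProbabilityMeasure μ] (X : Ω → ℝ) (hX : Measurable X) {q : ℝ} (hq : 1 < q)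
    (hA : ∀ l : ℝ, 0 < l →
      ∫⁻ ω in {ω | X ω < 0}, ENNReal.ofReal (Real.exp (l ^ q * (-X ω) ^ q)) ∂μ = ⊤)
    {K : ℝ} (hK : 1 ≤ K) (m0 : ℕ) :
    ∃ n, m0 ≤ n ∧ Odd n ∧ ENNReal.ofReal (K ^ n * (n:ℝ) ^ ((n:ℝ)/q)) <
      ∫⁻ ω in {ω | X ω < 0}, ENNReal.ofReal ((-X ω) ^ n * Real.exp (-X ω)) ∂μ := by
  have hq0 : (0:ℝ) < q := by linarith
  by_contra hcon
  push_neg at hcon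
  -- hcon : ∀ n, m0 ≤ n → Odd n → D n ≤ ofReal (...)
  set S : Set Ω := {ω | X ω < 0} with hSdef
  have hS : MeasurableSet S := measurableSet_lt hX measurable_const
  clear_value S
  -- moments bound
  have hJ : ∀ n, m0 ≤ n → Odd n →
      ∫⁻ ω in S, ENNReal.ofReal ((-X ω) ^ n) ∂μ ≤
        ENNReal.ofReal (K ^ n * (n:ℝ) ^ ((n:ℝ)/q)) := by
    intro n hn hodd
    refine le_trans (setLIntegral_mono (by fun_prop) (fun ω hω => ?_)) (hcon n hn hodd)
    have hω' : X ω < 0 := by rw [hSdef] at hω; exact hω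
    refine ENNReal.ofReal_le_ofReal ?_
    have h1 : (0:ℝ) ≤ (-X ω) ^ n := pow_nonneg (by linarith) n
    have h2 : (1:ℝ) ≤ Real.exp (-X ω) := Real.one_le_exp (by linarith)
    nlinarith
  obtain ⟨c, hcdef⟩ : ∃ c : ℝ, c = (m0 : ℝ) + 2 := ⟨_, rfl⟩
  have hc2 : (2:ℝ) ≤ c := by
    rw [hcdef]; have : (0:ℝ) ≤ (m0:ℝ) := Nat.cast_nonneg m0; linarith
  obtain ⟨k, hkdef⟩ : ∃ k : ℕ → ℕ, k = fun m : ℕ => 2 * ((Nat.ceil (q * (m:ℝ)) + m0) / 2) + 1 :=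
    ⟨_, rfl⟩
  have hk_odd : ∀ m, Odd (k m) := by
    intro m
    have hk : k m = 2 * ((Nat.ceil (q * (m:ℝ)) + m0) / 2) + 1 := by simp only [hkdef]
    exact ⟨(Nat.ceil (q * (m:ℝ)) + m0) / 2, by omega⟩
  have hk_ge_nat : ∀ m : ℕ, Nat.ceil (q * (m:ℝ)) + m0 ≤ k m := by
    intro m
    have h1 := Nat.div_add_mod (Nat.ceil (q * (m:ℝ)) + m0) 2
    have h2 := Nat.mod_lt (Nat.ceil (q * (m:ℝ)) + m0) (show 0 < 2 by norm_num)
    have hk : k m = 2 * ((Nat.ceil (q * (m:ℝ)) + m0) / 2) + 1 := by simp only [hkdef]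
    omega
  have hk_m0 : ∀ m, m0 ≤ k m := fun m => le_trans (Nat.le_add_left _ _) (hk_ge_nat m)
  have hk_geR : ∀ m : ℕ, q * m ≤ (k m : ℝ) := by
    intro m
    have h1 : q * m ≤ (Nat.ceil (q * m) : ℝ) := Nat.le_ceil _
    have h2 : ((Nat.ceil (q * m) : ℕ) : ℝ) ≤ (k m : ℝ) := by
      exact_mod_cast le_trans (Nat.le_add_right _ _) (hk_ge_nat m)
    linarith
  have hk_leR : ∀ m : ℕ, (k m : ℝ) ≤ q * m + c := by
    intro m
    have h1 : k m ≤ Nat.ceil (q * (m:ℝ)) + m0 + 1 := by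
      have := Nat.div_add_mod (Nat.ceil (q * (m:ℝ)) + m0) 2
      have hk : k m = 2 * ((Nat.ceil (q * (m:ℝ)) + m0) / 2) + 1 := by simp only [hkdef]
      omega
    have h2 : (Nat.ceil (q * (m:ℝ)) : ℝ) < q * m + 1 := Nat.ceil_lt_add_one (by positivity)
    have h3 : (k m : ℝ) ≤ (Nat.ceil (q * (m:ℝ)) : ℝ) + m0 + 1 := by exact_mod_cast h1
    rw [hcdef]; linarith
  -- choose l
  obtain ⟨G, hGdef⟩ : ∃ G : ℝ, G = K ^ q * ((q + c) * (2 * Real.exp 1) * (2:ℝ) ^ (c / q)) :=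
    ⟨_, rfl⟩
  have hG1 : 1 ≤ G := by
    have e1 : (1:ℝ) ≤ K ^ q := Real.one_le_rpow hK hq0.le
    have e2 : (1:ℝ) ≤ q + c := by linarith
    have e3 : (1:ℝ) ≤ 2 * Real.exp 1 := by nlinarith [Real.exp_one_gt_d9]
    have e4 : (1:ℝ) ≤ (2:ℝ) ^ (c / q) := Real.one_le_rpow (by norm_num) (by positivity)
    have e5 : (1:ℝ) ≤ (q + c) * (2 * Real.exp 1) := by nlinarith
    have e6 : (1:ℝ) ≤ (q + c) * (2 * Real.exp 1) * (2:ℝ) ^ (c / q) := by nlinarith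
    rw [hGdef]; nlinarith
  have hG0 : (0:ℝ) < G := by linarith
  obtain ⟨l, hldef⟩ : ∃ l : ℝ, l = ((G + 1)⁻¹) ^ (q⁻¹) := ⟨_, rfl⟩
  have hl : 0 < l := by rw [hldef]; positivity
  have hlq : l ^ q = (G + 1)⁻¹ := by
    rw [hldef, ← Real.rpow_mul (by positivity), inv_mul_cancel₀ (by linarith : q ≠ 0),
      Real.rpow_one]
  have hlq0 : 0 < l ^ q := by rw [hlq]; positivity
  -- the series terms
  obtain ⟨C, hCdef⟩ : ∃ C : ℝ, C = K ^ c * (q + c) ^ (c / q) := ⟨_, rfl⟩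
  have hC0 : 0 ≤ C := by rw [hCdef]; positivity
  obtain ⟨t, htdef⟩ : ∃ t : ℕ → ℝ, t = fun m => (l ^ q) ^ m / m.factorial *
      (1 + K ^ (k m) * ((k m : ℝ)) ^ ((k m : ℝ) / q)) := ⟨_, rfl⟩
  have ht_nonneg : ∀ m, 0 ≤ t m := by
    intro m
    have : (0:ℝ) ≤ K ^ (k m) * ((k m : ℝ)) ^ ((k m : ℝ) / q) := by positivity
    have : (0:ℝ) ≤ (l ^ q) ^ m / m.factorial := by positivity
    rw [htdef]
    positivity
  have ht_le : ∀ m, t m ≤ (1 + C) * (G * (G + 1)⁻¹) ^ m := by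
    intro m
    have hfac1 : (1:ℝ) ≤ m.factorial := by exact_mod_cast Nat.one_le_iff_ne_zero.2 m.factorial_pos.ne'
    have hfac0 : (0:ℝ) < m.factorial := by positivity
    have hgrow := aux_growth hq hK hc2 (hk_geR m) (hk_leR m)
    rw [← hGdef, ← hCdef] at hgrow
    have step1 : (l ^ q) ^ m / m.factorial ≤ ((G + 1)⁻¹) ^ m := by
      rw [hlq]
      exact div_le_self (by positivity) hfac1
    have step2 : (l ^ q) ^ m / m.factorial * (K ^ (k m) * ((k m : ℝ)) ^ ((k m : ℝ) / q))
        ≤ C * (G * (G + 1)⁻¹) ^ m := by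
      calc (l ^ q) ^ m / m.factorial * (K ^ (k m) * ((k m : ℝ)) ^ ((k m : ℝ) / q))
          ≤ (l ^ q) ^ m / m.factorial * (C * G ^ m * m.factorial) := by
            refine mul_le_mul_of_nonneg_left ?_ (by positivity)
            exact hgrow
        _ = C * (l ^ q * G) ^ m := by
            rw [mul_pow (l^q) G]
            field_simp
        _ = C * (G * (G + 1)⁻¹) ^ m := by rw [hlq, mul_comm ((G+1)⁻¹) G]
    have hpow1 : ((G + 1)⁻¹ : ℝ) ^ m ≤ (G * (G + 1)⁻¹) ^ m := by
      refine pow_le_pow_left₀ (by positivity) ?_ m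
      nlinarith [inv_pos.2 (show (0:ℝ) < G + 1 by linarith)]
    have expand : t m = (l ^ q) ^ m / m.factorial +
        (l ^ q) ^ m / m.factorial * (K ^ (k m) * ((k m : ℝ)) ^ ((k m : ℝ) / q)) := by
      rw [htdef]; ring
    rw [expand]
    have := le_trans step1 hpow1
    nlinarith [pow_nonneg (show (0:ℝ) ≤ G * (G+1)⁻¹ by positivity) m]
  have hrho : G * (G + 1)⁻¹ < 1 := by
    rw [mul_inv_lt_iff₀ (by linarith)]
    linarith
  have ht_sum : Summable t :=
    Summable.of_nonneg_of_le ht_nonneg ht_le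
      (((summable_geometric_of_lt_one (by positivity) hrho).mul_left _))
  -- integral bound per term
  have hInt : ∀ m : ℕ,
      ∫⁻ ω in S, ENNReal.ofReal ((l ^ q * (-X ω) ^ q) ^ m / m.factorial) ∂μ ≤
        ENNReal.ofReal (t m) := by
    intro m
    have step1 : ∫⁻ ω in S, ENNReal.ofReal ((l ^ q * (-X ω) ^ q) ^ m / m.factorial) ∂μ ≤
        ∫⁻ ω in S, (ENNReal.ofReal ((l ^ q) ^ m / m.factorial) *
          (1 + ENNReal.ofReal ((-X ω) ^ (k m)))) ∂μ := by
      refine setLIntegral_mono (by fun_prop) (fun ω hω => ?_)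
      have hω' : X ω < 0 := by rw [hSdef] at hω; exact hω
      have ha : (0:ℝ) < -X ω := by linarith
      have e1 : (l ^ q * (-X ω) ^ q) ^ m / m.factorial
          = (l ^ q) ^ m / m.factorial * ((-X ω) ^ q) ^ m := by ring
      have e2 : ((-X ω) ^ q) ^ m = (-X ω) ^ (q * m) := by
        rw [← Real.rpow_natCast ((-X ω) ^ q) m, ← Real.rpow_mul ha.le]
      have e3 : (-X ω) ^ (q * m) ≤ 1 + (-X ω) ^ (k m) :=
        aux_rpow_le_one_add_pow ha.le (by positivity) (hk_geR m)
      calc ENNReal.ofReal ((l ^ q * (-X ω) ^ q) ^ m / m.factorial)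
          ≤ ENNReal.ofReal ((l ^ q) ^ m / m.factorial * (1 + (-X ω) ^ (k m))) := by
            refine ENNReal.ofReal_le_ofReal ?_
            rw [e1, e2]
            refine mul_le_mul_of_nonneg_left e3 (by positivity)
        _ = ENNReal.ofReal ((l ^ q) ^ m / m.factorial) *
              ENNReal.ofReal (1 + (-X ω) ^ (k m)) := by
            rw [ENNReal.ofReal_mul (by positivity)]
        _ ≤ ENNReal.ofReal ((l ^ q) ^ m / m.factorial) *
              (1 + ENNReal.ofReal ((-X ω) ^ (k m))) := by
            refine mul_le_mul_of_nonneg_left ?_ zero_le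
            rw [← ENNReal.ofReal_one]
            exact ENNReal.ofReal_add_le
    have step2 : ∫⁻ ω in S, (ENNReal.ofReal ((l ^ q) ^ m / m.factorial) *
          (1 + ENNReal.ofReal ((-X ω) ^ (k m)))) ∂μ =
        ENNReal.ofReal ((l ^ q) ^ m / m.factorial) *
          (μ S + ∫⁻ ω in S, ENNReal.ofReal ((-X ω) ^ (k m)) ∂μ) := by
      rw [lintegral_const_mul' _ _ ENNReal.ofReal_ne_top]
      congr 1
      rw [lintegral_add_left measurable_const]
      simp [Measure.restrict_apply_univ]
    have step3 : μ S + ∫⁻ ω in S, ENNReal.ofReal ((-X ω) ^ (k m)) ∂μ ≤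
        ENNReal.ofReal (1 + K ^ (k m) * ((k m : ℝ)) ^ ((k m : ℝ) / q)) := by
      rw [ENNReal.ofReal_add (by norm_num) (by positivity), ENNReal.ofReal_one]
      exact add_le_add prob_le_one (hJ (k m) (hk_m0 m) (hk_odd m))
    calc ∫⁻ ω in S, ENNReal.ofReal ((l ^ q * (-X ω) ^ q) ^ m / m.factorial) ∂μ
        ≤ ENNReal.ofReal ((l ^ q) ^ m / m.factorial) *
          (μ S + ∫⁻ ω in S, ENNReal.ofReal ((-X ω) ^ (k m)) ∂μ) := step1.trans_eq step2
      _ ≤ ENNReal.ofReal ((l ^ q) ^ m / m.factorial) *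
          ENNReal.ofReal (1 + K ^ (k m) * ((k m : ℝ)) ^ ((k m : ℝ) / q)) :=
            mul_le_mul_of_nonneg_left step3 zero_le
      _ = ENNReal.ofReal (t m) := by
          rw [← ENNReal.ofReal_mul (by positivity), htdef]
  -- expand the exponential as a series
  have hexp : ∫⁻ ω in S, ENNReal.ofReal (Real.exp (l ^ q * (-X ω) ^ q)) ∂μ =
      ∑' m : ℕ, ∫⁻ ω in S, ENNReal.ofReal ((l ^ q * (-X ω) ^ q) ^ m / m.factorial) ∂μ := by
    rw [← lintegral_tsum (fun m => by fun_prop)]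
    refine setLIntegral_congr_fun hS (fun ω hω => ?_)
    have hω' : X ω < 0 := by rw [hSdef] at hω; exact hω
    have ha : (0:ℝ) < -X ω := by linarith
    have hx0 : 0 ≤ l ^ q * (-X ω) ^ q := by positivity
    have hser : Real.exp (l ^ q * (-X ω) ^ q)
        = ∑' m : ℕ, (l ^ q * (-X ω) ^ q) ^ m / m.factorial := by
      rw [Real.exp_eq_exp_ℝ, NormedSpace.exp_eq_tsum_div]
    rw [hser, ENNReal.ofReal_tsum_of_nonneg (fun m => by positivity)
      (Real.summable_pow_div_factorial _)]
  -- contradiction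
  have hfin : ∫⁻ ω in S, ENNReal.ofReal (Real.exp (l ^ q * (-X ω) ^ q)) ∂μ < ⊤ := by
    rw [hexp]
    calc ∑' m : ℕ, ∫⁻ ω in S, ENNReal.ofReal ((l ^ q * (-X ω) ^ q) ^ m / m.factorial) ∂μ
        ≤ ∑' m : ℕ, ENNReal.ofReal (t m) := ENNReal.tsum_le_tsum hInt
      _ = ENNReal.ofReal (∑' m, t m) := (ENNReal.ofReal_tsum_of_nonneg ht_nonneg ht_sum).symm
      _ < ⊤ := ENNReal.ofReal_lt_top
  exact absurd (hA l hl) hfin.ne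

/-- Necessary condition on the tails: let `X` have `P(X<0) > 0` and `P(X≥0) > 0`,
with `A = -X` conditioned on `X < 0` and `B = X` conditioned on `X ≥ 0`.  If `B` is
q-subweibull for some `q > 1` while `A` is subexponential (`E[e^A] < ∞`) but not
q-subweibull, then the liminf over odd `n` of `E[Bⁿe^{-B}] / E[Aⁿeᴬ]` is `0`;
consequently the candidate mixed Poisson PMF `f(n) = E[Xⁿe^{-X}]/n!` is negative for
some odd `n` and cannot be a valid probability mass function. -/
theorem mixed_poisson_tail_necessary
    {Ω : Type*} [MeasurableSpace Ω] (μ : Measure Ω) [IsProbabilityMeasure μ]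
    (X : Ω → ℝ) (hX : Measurable X) (q : ℝ) (hq : 1 < q)
    (hneg : 0 < μ {ω | X ω < 0}) (hpos : 0 < μ {ω | 0 ≤ X ω})
    (hB : ∃ l : ℝ, 0 < l ∧
      ∫⁻ ω in {ω | 0 ≤ X ω}, ENNReal.ofReal (Real.exp (l ^ q * (X ω) ^ q)) ∂μ < ⊤)
    (hAexp : ∫⁻ ω in {ω | X ω < 0}, ENNReal.ofReal (Real.exp (-X ω)) ∂μ < ⊤)
    (hA : ∀ l : ℝ, 0 < l →
      ∫⁻ ω in {ω | X ω < 0}, ENNReal.ofReal (Real.exp (l ^ q * (-X ω) ^ q)) ∂μ = ⊤) :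
    Filter.liminf
        (fun n : ℕ =>
          (∫⁻ ω in {ω | 0 ≤ X ω}, ENNReal.ofReal (X ω ^ n * Real.exp (-X ω)) ∂μ)
            / ∫⁻ ω in {ω | X ω < 0}, ENNReal.ofReal ((-X ω) ^ n * Real.exp (-X ω)) ∂μ)
        (Filter.atTop ⊓ Filter.principal {n : ℕ | Odd n}) = 0 ∧
      ∃ n : ℕ, Odd n ∧
        (∫⁻ ω in {ω | 0 ≤ X ω}, ENNReal.ofReal (X ω ^ n * Real.exp (-X ω)) ∂μ)
          < ∫⁻ ω in {ω | X ω < 0}, ENNReal.ofReal ((-X ω) ^ n * Real.exp (-X ω)) ∂μ := by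
  obtain ⟨lB, hlB, hI⟩ := hB
  set N : ℕ → ℝ≥0∞ := fun n =>
    ∫⁻ ω in {ω | 0 ≤ X ω}, ENNReal.ofReal (X ω ^ n * Real.exp (-X ω)) ∂μ with hNdef
  set D : ℕ → ℝ≥0∞ := fun n =>
    ∫⁻ ω in {ω | X ω < 0}, ENNReal.ofReal ((-X ω) ^ n * Real.exp (-X ω)) ∂μ with hDdef
  set I : ℝ≥0∞ := ∫⁻ ω in {ω | 0 ≤ X ω}, ENNReal.ofReal (Real.exp (lB ^ q * X ω ^ q)) ∂μ
    with hIdef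
  obtain ⟨β, hβdef⟩ : ∃ β : ℝ, β = lB⁻¹ * (1 / (q * Real.exp 1)) ^ (1/q) := ⟨_, rfl⟩
  have hβ0 : 0 ≤ β := by rw [hβdef]; positivity
  obtain ⟨Ir, hIrdef⟩ : ∃ Ir : ℝ, Ir = I.toReal := ⟨_, rfl⟩
  have hIr0 : 0 ≤ Ir := by rw [hIrdef]; exact ENNReal.toReal_nonneg
  have hIIr : I = ENNReal.ofReal Ir := by rw [hIrdef, ENNReal.ofReal_toReal hI.ne]
  -- the key claim
  have key : ∀ δ : ℝ, 0 < δ → ∀ m1 : ℕ, ∃ n, m1 ≤ n ∧ Odd n ∧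
      N n < ENNReal.ofReal δ * D n := by
    intro δ hδ m1
    obtain ⟨n2, hn2⟩ := exists_pow_lt_of_lt_one (show (0:ℝ) < δ / (Ir + 1) by positivity)
      (show (1/2 : ℝ) < 1 by norm_num)
    obtain ⟨n, hn_ge, hodd, hD⟩ := aux_denom_large μ X hX hq hA
      (K := 2 * β + 1) (by linarith) (max (max m1 n2) 1)
    have hn1 : 1 ≤ n := le_trans (le_max_right _ _) hn_ge
    have hnn2 : n2 ≤ n := le_trans (le_trans (le_max_right _ _) (le_max_left _ _)) hn_ge
    refine ⟨n, le_trans (le_trans (le_max_left _ _) (le_max_left _ _)) hn_ge, hodd, ?_⟩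
    have hNb := aux_numer_bound μ X hX hq hlB hn1
    rw [← hβdef, ← hIdef] at hNb
    have hreal : β ^ n * (n:ℝ) ^ ((n:ℝ)/q) * Ir ≤ δ * ((2*β+1) ^ n * (n:ℝ) ^ ((n:ℝ)/q)) := by
      have e1 : (1/2 : ℝ)^n ≤ (1/2 : ℝ)^n2 :=
        pow_le_pow_of_le_one (by norm_num) (by norm_num) hnn2
      have e2 : β ^ n ≤ (1/2 : ℝ)^n * (2*β+1) ^ n := by
        rw [← mul_pow]
        refine pow_le_pow_left₀ hβ0 (by linarith) n
      have e3 : (0:ℝ) ≤ (n:ℝ) ^ ((n:ℝ)/q) := Real.rpow_nonneg (Nat.cast_nonneg n) _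
      have e4 : (0:ℝ) ≤ (2*β+1) ^ n := by positivity
      have e5 : (1/2 : ℝ)^n * Ir < δ := by
        calc (1/2 : ℝ)^n * Ir ≤ (1/2 : ℝ)^n2 * (Ir + 1) := by
              nlinarith [pow_nonneg (show (0:ℝ) ≤ 1/2 by norm_num) n]
          _ < δ := by
              rw [lt_div_iff₀ (by positivity)] at hn2
              linarith [hn2]
      have h6 : β ^ n * ((n:ℝ) ^ ((n:ℝ)/q) * Ir) ≤
          ((1/2 : ℝ)^n * (2*β+1) ^ n) * ((n:ℝ) ^ ((n:ℝ)/q) * Ir) :=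
        mul_le_mul_of_nonneg_right e2 (mul_nonneg e3 hIr0)
      have h7 : ((1/2 : ℝ)^n * Ir) * ((2*β+1) ^ n * (n:ℝ) ^ ((n:ℝ)/q)) ≤
          δ * ((2*β+1) ^ n * (n:ℝ) ^ ((n:ℝ)/q)) :=
        mul_le_mul_of_nonneg_right e5.le (mul_nonneg e4 e3)
      nlinarith [h6, h7]
    calc N n ≤ ENNReal.ofReal (β ^ n * (n:ℝ) ^ ((n:ℝ)/q)) * I := hNb
      _ = ENNReal.ofReal (β ^ n * (n:ℝ) ^ ((n:ℝ)/q) * Ir) := by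
          rw [hIIr, ← ENNReal.ofReal_mul (by positivity)]
      _ ≤ ENNReal.ofReal (δ * ((2*β+1) ^ n * (n:ℝ) ^ ((n:ℝ)/q))) :=
          ENNReal.ofReal_le_ofReal hreal
      _ = ENNReal.ofReal δ * ENNReal.ofReal ((2*β+1) ^ n * (n:ℝ) ^ ((n:ℝ)/q)) :=
          ENNReal.ofReal_mul hδ.le
      _ < ENNReal.ofReal δ * D n := by
          refine (ENNReal.mul_lt_mul_iff_right ?_ ENNReal.ofReal_ne_top).2 hD
          simp [ENNReal.ofReal_eq_zero, not_le, hδ]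
  have ratio_le : ∀ δ : ℝ, 0 < δ → ∀ m1 : ℕ, ∃ n, m1 ≤ n ∧ Odd n ∧
      N n / D n ≤ ENNReal.ofReal δ := by
    intro δ hδ m1
    obtain ⟨n, h1, h2, h3⟩ := key δ hδ m1
    refine ⟨n, h1, h2, ?_⟩
    calc N n / D n ≤ (ENNReal.ofReal δ * D n) / D n := by
          exact ENNReal.div_le_div h3.le le_rfl
      _ = ENNReal.ofReal δ * (D n / D n) := by rw [mul_div_assoc]
      _ ≤ ENNReal.ofReal δ * 1 := mul_le_mul_of_nonneg_left ENNReal.div_self_le_one zero_le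
      _ = ENNReal.ofReal δ := mul_one _
  constructor
  · refine le_antisymm ?_ zero_le
    refine ENNReal.le_of_forall_pos_le_add (fun ε hε _ => ?_)
    rw [zero_add]
    refine liminf_le_of_frequently_le' ?_
    rw [frequently_inf_principal]
    rw [Filter.frequently_atTop]
    intro m1
    obtain ⟨n, h1, h2, h3⟩ := ratio_le ε (by exact_mod_cast hε) m1
    refine ⟨n, h1, h2, ?_⟩
    calc N n / D n ≤ ENNReal.ofReal (ε:ℝ) := h3
      _ = (ε : ℝ≥0∞) := ENNReal.ofReal_coe_nnreal
  · obtain ⟨n, _, hodd, hlt⟩ := key 1 one_pos 0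
    refine ⟨n, hodd, ?_⟩
    simpa using hlt
end
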